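/- Let γ, ε > 0 with ε < (√2 − 1)γ and b₁, b₂, b₃, b₄ as in the lossless dual-NOPA system. The stationary points of f(m,n) = 2(b₁ + 2b₂ cos m cos n + b₃ cos 2m)/(b₄ − b₃ cos 2m) on the torus ℝ²/(2πℤ)² are exactly the points with (sin m = 0 and sin n = 0) or (cos m = 0 and cos n = 0), and the global minimum of f is attained at (m,n) = (0,0) and (m,n) = (π,π) with value 2(b₁ + 2b₂ + b₃)/(b₄ − b₃). -/

import Mathlib

/-!
Write `c = cos m` and `d = cos n`; as `cos 2m = 2c² - 1`, the denominator is `b₄ + b₃ - 2b₃c² > 0`.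
The `n`-derivative vanishes iff `c sin n = 0`, and for `c = 0` the `m`-derivative forces `d = 0`.
For `sin n = 0`, the identity `2b₂²(b₄ + b₃) = b₃(b₁ + b₄)²` turns `2b₂d` times the cofactor of
`sin m` in the `m`-derivative into `b₃(b₁ + b₄ + 2b₂cd)² > 0`, so `sin m = 0`.

For the minimum, `b₂ < 0` lets us replace `cd` by `v = |c|`; the remaining inequality in `v ≤ 1`
factors as `(1 - v)` times a term that is nonnegative because
`-b₂(b₄ - b₃) - 2b₃(b₁ + b₄ + 2b₂) = 4εγ(γ² - ε²)(ε² + γ²)²(γ² - 2εγ - ε²)⁴`.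
-/

open Real

noncomputable def phaseSpectrum (b₁ b₂ b₃ b₄ m n : ℝ) : ℝ :=
  2 * (b₁ + 2 * b₂ * cos m * cos n + b₃ * cos (2 * m)) / (b₄ - b₃ * cos (2 * m))

namespace phaseSpectrum

variable {b₁ b₂ b₃ b₄ : ℝ}

lemma denom_pos (h₃ : 0 ≤ b₃) (hD : 0 < b₄ - b₃) (m : ℝ) : 0 < b₄ - b₃ * cos (2 * m) := by
  linarith [mul_le_of_le_one_right h₃ (cos_le_one (2 * m))]

lemma hasDerivAt_left (m n : ℝ) (hD : b₄ - b₃ * cos (2 * m) ≠ 0) :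
    HasDerivAt (fun m' => phaseSpectrum b₁ b₂ b₃ b₄ m' n)
      (-4 * sin m * (b₂ * cos n * (b₄ - b₃ * cos (2 * m)) +
        2 * b₃ * cos m * (b₁ + b₄ + 2 * b₂ * cos m * cos n)) / (b₄ - b₃ * cos (2 * m)) ^ 2) m := by
  have hcos₂ : HasDerivAt (fun y => cos (2 * y)) (-sin (2 * m) * 2) m :=
    ((hasDerivAt_id m).const_mul 2).cos.congr_deriv (by simp)
  have hnum := (((((hasDerivAt_cos m).const_mul (2 * b₂)).mul_const (cos n)).const_add b₁).add
    (hcos₂.const_mul b₃)).const_mul 2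
  simp only [Pi.add_apply] at hnum
  have hden := (hcos₂.const_mul b₃).const_sub b₄
  unfold phaseSpectrum
  refine (hnum.div hden hD).congr_deriv ?_
  rw [sin_two_mul]
  ring

lemma hasDerivAt_right (m n : ℝ) :
    HasDerivAt (fun n' => phaseSpectrum b₁ b₂ b₃ b₄ m n')
      (-4 * b₂ * cos m * sin n / (b₄ - b₃ * cos (2 * m))) n := by
  have hnum := (((((hasDerivAt_cos n).const_mul (2 * b₂ * cos m)).const_add b₁).add_const
    (b₃ * cos (2 * m))).const_mul 2)
  unfold phaseSpectrum
  refine (hnum.div_const (b₄ - b₃ * cos (2 * m))).congr_deriv ?_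
  ring

lemma critical_factor_ne_zero (h₂ : b₂ < 0) (h₃ : 0 < b₃) (hS : 0 < b₁ + b₄ + 2 * b₂)
    (hId : 2 * b₂ ^ 2 * (b₄ + b₃) = b₃ * (b₁ + b₄) ^ 2) {m n : ℝ} (hn : sin n = 0) :
    b₂ * cos n * (b₄ - b₃ * cos (2 * m)) + 2 * b₃ * cos m * (b₁ + b₄ + 2 * b₂ * cos m * cos n)
      ≠ 0 := by
  have hcos_n : cos n ^ 2 = 1 := by simpa [hn] using sin_sq_add_cos_sq n
  have hsq : 2 * b₂ * cos n * (b₂ * cos n * (b₄ - b₃ * cos (2 * m)) +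
      2 * b₃ * cos m * (b₁ + b₄ + 2 * b₂ * cos m * cos n)) =
      b₃ * (b₁ + b₄ + 2 * b₂ * cos m * cos n) ^ 2 := by
    rw [cos_two_mul]
    linear_combination cos n ^ 2 * hId + b₃ * (b₁ + b₄) ^ 2 * hcos_n
  have hpos : 0 < b₁ + b₄ + 2 * b₂ * cos m * cos n := by
    have : cos m * cos n ≤ 1 := by
      nlinarith [abs_le.mp (abs_cos_le_one m), abs_le.mp (abs_cos_le_one n)]
    nlinarith
  intro h
  rw [h, mul_zero] at hsq
  exact (mul_pos h₃ (pow_pos hpos 2)).ne hsq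

theorem deriv_eq_zero_iff (h₂ : b₂ < 0) (h₃ : 0 < b₃) (hD : 0 < b₄ - b₃)
    (hS : 0 < b₁ + b₄ + 2 * b₂) (hId : 2 * b₂ ^ 2 * (b₄ + b₃) = b₃ * (b₁ + b₄) ^ 2) (m n : ℝ) :
    (deriv (fun m' => phaseSpectrum b₁ b₂ b₃ b₄ m' n) m = 0 ∧
      deriv (fun n' => phaseSpectrum b₁ b₂ b₃ b₄ m n') n = 0) ↔
    (sin m = 0 ∧ sin n = 0) ∨ (cos m = 0 ∧ cos n = 0) := by
  have hDm := (denom_pos h₃.le hD m).ne'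
  rw [(hasDerivAt_left m n hDm).deriv, (hasDerivAt_right m n).deriv, div_eq_zero_iff,
    div_eq_zero_iff, or_iff_left (pow_ne_zero 2 hDm), or_iff_left hDm]
  simp only [mul_eq_zero, neg_eq_zero, four_ne_zero, h₂.ne, false_or]
  constructor
  · rintro ⟨hm, hcos_m | hsin_n⟩
    · have hsin_m : sin m ≠ 0 := by
        intro h; simpa [h, hcos_m] using sin_sq_add_cos_sq m
      have hcos₂ : cos (2 * m) = -1 := by rw [cos_two_mul, hcos_m]; norm_num
      simp only [hsin_m, false_or, hcos_m, hcos₂] at hm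
      have hprod : b₂ * (b₄ + b₃) * cos n = 0 := by linear_combination hm
      exact .inr ⟨hcos_m, (mul_eq_zero.mp hprod).resolve_left
        (mul_ne_zero h₂.ne (by linarith))⟩
    · exact .inl ⟨hm.resolve_right (critical_factor_ne_zero h₂ h₃ hS hId hsin_n), hsin_n⟩
  · rintro (⟨hsin_m, hsin_n⟩ | ⟨hcos_m, hcos_n⟩) <;> simp [*]

lemma zero_zero_eq : phaseSpectrum b₁ b₂ b₃ b₄ 0 0 = 2 * (b₁ + 2 * b₂ + b₃) / (b₄ - b₃) := by
  simp [phaseSpectrum]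

lemma pi_pi_eq : phaseSpectrum b₁ b₂ b₃ b₄ π π = 2 * (b₁ + 2 * b₂ + b₃) / (b₄ - b₃) := by
  simp [phaseSpectrum]

lemma cross_mul_le_of_le_one (h₃ : 0 ≤ b₃) (hS : 0 ≤ b₁ + b₄ + 2 * b₂)
    (hmargin : 2 * b₃ * (b₁ + b₄ + 2 * b₂) ≤ -b₂ * (b₄ - b₃)) {v : ℝ} (hv : v ≤ 1) :
    (b₁ + 2 * b₂ + b₃) * (b₄ + b₃ - 2 * b₃ * v ^ 2) ≤
      (b₁ + 2 * b₂ * v + b₃ * (2 * v ^ 2 - 1)) * (b₄ - b₃) := by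
  have hfactor : (b₁ + 2 * b₂ * v + b₃ * (2 * v ^ 2 - 1)) * (b₄ - b₃) -
      (b₁ + 2 * b₂ + b₃) * (b₄ + b₃ - 2 * b₃ * v ^ 2) =
      2 * (1 - v) * (-b₂ * (b₄ - b₃) - b₃ * (b₁ + b₄ + 2 * b₂) * (1 + v)) := by ring
  have hsecond : 0 ≤ -b₂ * (b₄ - b₃) - b₃ * (b₁ + b₄ + 2 * b₂) * (1 + v) := by
    nlinarith [mul_nonneg h₃ hS]
  nlinarith [mul_nonneg (sub_nonneg.mpr hv) hsecond]

theorem zero_zero_le (h₂ : b₂ ≤ 0) (h₃ : 0 ≤ b₃) (hD : 0 < b₄ - b₃)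
    (hS : 0 ≤ b₁ + b₄ + 2 * b₂) (hmargin : 2 * b₃ * (b₁ + b₄ + 2 * b₂) ≤ -b₂ * (b₄ - b₃))
    (m n : ℝ) : phaseSpectrum b₁ b₂ b₃ b₄ 0 0 ≤ phaseSpectrum b₁ b₂ b₃ b₄ m n := by
  rw [zero_zero_eq, phaseSpectrum, div_le_div_iff₀ hD (denom_pos h₃ hD m)]
  have hcd : cos m * cos n ≤ |cos m| := by
    calc cos m * cos n ≤ |cos m| * |cos n| := abs_mul (cos m) (cos n) ▸ le_abs_self _
      _ ≤ |cos m| := mul_le_of_le_one_right (abs_nonneg _) (abs_cos_le_one n)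
  have hreduced := cross_mul_le_of_le_one h₃ hS hmargin (abs_cos_le_one m)
  rw [sq_abs] at hreduced
  rw [cos_two_mul]
  nlinarith [mul_le_mul_of_nonpos_left hcd h₂]

end phaseSpectrum

namespace DualNOPA

noncomputable def b₁ (ε γ : ℝ) : ℝ :=
  ε ^ 8 + 12 * ε ^ 6 * γ ^ 2 - 10 * ε ^ 4 * γ ^ 4 + 12 * ε ^ 2 * γ ^ 6 + γ ^ 8

noncomputable def b₂ (ε γ : ℝ) : ℝ := 4 * ε * γ * (ε ^ 2 - γ ^ 2) * (ε ^ 2 + γ ^ 2) ^ 2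

noncomputable def b₃ (ε γ : ℝ) : ℝ := 8 * ε ^ 2 * γ ^ 2 * (ε ^ 2 - γ ^ 2) ^ 2

noncomputable def b₄ (ε γ : ℝ) : ℝ :=
  ε ^ 8 - 4 * ε ^ 6 * γ ^ 2 + 22 * ε ^ 4 * γ ^ 4 - 4 * ε ^ 2 * γ ^ 6 + γ ^ 8

variable {ε γ : ℝ}

lemma sq_sub_two_mul_sub_sq_pos (hγ : 0 < γ) (hε : 0 < ε) (hstab : ε < (√2 - 1) * γ) :
    0 < γ ^ 2 - 2 * ε * γ - ε ^ 2 := by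
  have hlt : ε + γ < √2 * γ := by linarith
  have hsq := mul_self_lt_mul_self (by positivity) hlt
  nlinarith [sq_sqrt (zero_le_two : (0 : ℝ) ≤ 2)]

lemma lt_of_sq_sub_two_mul_sub_sq_pos (hγ : 0 < γ) (hε : 0 < ε)
    (hK : 0 < γ ^ 2 - 2 * ε * γ - ε ^ 2) : ε < γ := by
  nlinarith [mul_pos hε hγ]

lemma b₂_neg (hγ : 0 < γ) (hε : 0 < ε) (hεγ : ε < γ) : b₂ ε γ < 0 := by
  have : ε ^ 2 - γ ^ 2 < 0 := by nlinarith
  unfold b₂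
  have := mul_pos (mul_pos (mul_pos four_pos hε) hγ) (by positivity : 0 < (ε ^ 2 + γ ^ 2) ^ 2)
  nlinarith

lemma b₃_pos (hγ : 0 < γ) (hε : 0 < ε) (hεγ : ε < γ) : 0 < b₃ ε γ := by
  have : ε ^ 2 - γ ^ 2 ≠ 0 := by nlinarith
  unfold b₃
  positivity

lemma b₄_sub_b₃_pos (hγ : 0 < γ) (hε : 0 < ε) (hK : 0 < γ ^ 2 - 2 * ε * γ - ε ^ 2) :
    0 < b₄ ε γ - b₃ ε γ := by
  have hfactor : b₄ ε γ - b₃ ε γ =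
      ((γ ^ 2 - 2 * ε * γ - ε ^ 2) * (γ ^ 2 + 2 * ε * γ - ε ^ 2)) ^ 2 := by
    unfold b₃ b₄; ring
  have : 0 < γ ^ 2 + 2 * ε * γ - ε ^ 2 := by nlinarith [mul_pos hε hγ]
  rw [hfactor]
  positivity

lemma b₁_add_b₄_add_two_mul_b₂_pos (hγ : 0 < γ) (hK : 0 < γ ^ 2 - 2 * ε * γ - ε ^ 2) :
    0 < b₁ ε γ + b₄ ε γ + 2 * b₂ ε γ := by
  have hfactor : b₁ ε γ + b₄ ε γ + 2 * b₂ ε γ =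
      2 * (ε ^ 2 + γ ^ 2) ^ 2 * (γ ^ 2 - 2 * ε * γ - ε ^ 2) ^ 2 := by
    unfold b₁ b₂ b₄; ring
  rw [hfactor]
  positivity

lemma two_mul_b₂_sq_mul (ε γ : ℝ) :
    2 * b₂ ε γ ^ 2 * (b₄ ε γ + b₃ ε γ) = b₃ ε γ * (b₁ ε γ + b₄ ε γ) ^ 2 := by
  unfold b₁ b₂ b₃ b₄; ring

lemma margin_nonneg (hγ : 0 < γ) (hε : 0 < ε) (hεγ : ε < γ) :
    2 * b₃ ε γ * (b₁ ε γ + b₄ ε γ + 2 * b₂ ε γ) ≤ -b₂ ε γ * (b₄ ε γ - b₃ ε γ) := by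
  have hfactor : -b₂ ε γ * (b₄ ε γ - b₃ ε γ) - 2 * b₃ ε γ * (b₁ ε γ + b₄ ε γ + 2 * b₂ ε γ) =
      4 * ε * γ * (γ ^ 2 - ε ^ 2) * (ε ^ 2 + γ ^ 2) ^ 2 * (γ ^ 2 - 2 * ε * γ - ε ^ 2) ^ 4 := by
    unfold b₁ b₂ b₃ b₄; ring
  have : 0 < γ ^ 2 - ε ^ 2 := by nlinarith
  have : 0 ≤ -b₂ ε γ * (b₄ ε γ - b₃ ε γ) - 2 * b₃ ε γ * (b₁ ε γ + b₄ ε γ + 2 * b₂ ε γ) := by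
    rw [hfactor]; positivity
  linarith

end DualNOPA

theorem stmt12 (γ ε : ℝ) (hγ : 0 < γ) (hε : 0 < ε)
    (hstab : ε < (Real.sqrt 2 - 1) * γ)
    (b₁ b₂ b₃ b₄ : ℝ)
    (hb₁ : b₁ = ε ^ 8 + 12 * ε ^ 6 * γ ^ 2 - 10 * ε ^ 4 * γ ^ 4 + 12 * ε ^ 2 * γ ^ 6 + γ ^ 8)
    (hb₂ : b₂ = 4 * ε * γ * (ε ^ 2 - γ ^ 2) * (ε ^ 2 + γ ^ 2) ^ 2)
    (hb₃ : b₃ = 8 * ε ^ 2 * γ ^ 2 * (ε ^ 2 - γ ^ 2) ^ 2)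
    (hb₄ : b₄ = ε ^ 8 - 4 * ε ^ 6 * γ ^ 2 + 22 * ε ^ 4 * γ ^ 4 - 4 * ε ^ 2 * γ ^ 6 + γ ^ 8)
    (f : ℝ → ℝ → ℝ)
    (hf : ∀ m n, f m n =
      2 * (b₁ + 2 * b₂ * Real.cos m * Real.cos n + b₃ * Real.cos (2 * m)) /
        (b₄ - b₃ * Real.cos (2 * m))) :
    (∀ m n : ℝ,
      (deriv (fun m' => f m' n) m = 0 ∧ deriv (fun n' => f m n') n = 0) ↔
      ((Real.sin m = 0 ∧ Real.sin n = 0) ∨ (Real.cos m = 0 ∧ Real.cos n = 0))) ∧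
    (∀ m n : ℝ, f 0 0 ≤ f m n) ∧
    f 0 0 = 2 * (b₁ + 2 * b₂ + b₃) / (b₄ - b₃) ∧
    f Real.pi Real.pi = 2 * (b₁ + 2 * b₂ + b₃) / (b₄ - b₃) := by
  obtain rfl : b₁ = DualNOPA.b₁ ε γ := hb₁
  obtain rfl : b₂ = DualNOPA.b₂ ε γ := hb₂
  obtain rfl : b₃ = DualNOPA.b₃ ε γ := hb₃
  obtain rfl : b₄ = DualNOPA.b₄ ε γ := hb₄
  obtain rfl : f = phaseSpectrum _ _ _ _ := funext₂ hf
  have hK := DualNOPA.sq_sub_two_mul_sub_sq_pos hγ hε hstab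
  have hεγ := DualNOPA.lt_of_sq_sub_two_mul_sub_sq_pos hγ hε hK
  have h₂ := DualNOPA.b₂_neg hγ hε hεγ
  have h₃ := DualNOPA.b₃_pos hγ hε hεγ
  have hD := DualNOPA.b₄_sub_b₃_pos hγ hε hK
  have hS := DualNOPA.b₁_add_b₄_add_two_mul_b₂_pos hγ hK
  exact ⟨phaseSpectrum.deriv_eq_zero_iff h₂ h₃ hD hS (DualNOPA.two_mul_b₂_sq_mul ε γ),
    phaseSpectrum.zero_zero_le h₂.le h₃.le hD hS.le (DualNOPA.margin_nonneg hγ hε hεγ),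
    phaseSpectrum.zero_zero_eq, phaseSpectrum.pi_pi_eq⟩
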